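/- arXiv:1510.08781 — 2 statements merged into one kernel-verified Lean document; each statement's English description precedes it below -/
import Mathlib

section
/- For every g ∈ F and every x ∈ [ω]^ω, the measures μ^{g·x} and μ^x are equivalent, i.e., mutually absolutely continuous. -/
open MeasureTheory Filter Set
open scoped ENNReal

noncomputable section

/-- `fEnum x` is the increasing enumeration `f_x : ω → ω` of the set `x ∈ [ω]^ω`. -/
def fEnum (x : Set ℕ) : ℕ → ℕ := Nat.nth (· ∈ x)

/-- The sequence `α^x ∈ [1/4,3/4]^ω` attached to `x ∈ [ω]^ω`:
`α^x_n = 1/4 + 1/(2·√(f_x⁻¹(n)+1))` if `n ∈ x` and `α^x_n = 1/4` otherwise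
(for `n ∈ x`, `f_x⁻¹(n)` is the number of elements of `x` below `n`). -/
noncomputable def alphaSeq (x : Set ℕ) (n : ℕ) : ℝ :=
  haveI := Classical.decPred (· ∈ x)
  if n ∈ x then 1/4 + 1/(2 * Real.sqrt ((Nat.count (· ∈ x) n : ℝ) + 1)) else 1/4

/-- `ρ(x,y) = Σ_n (α^x_n - α^y_n)² ∈ [0,∞]`. -/
noncomputable def rho (x y : Set ℕ) : ℝ≥0∞ :=
  ∑' n : ℕ, ENNReal.ofReal ((alphaSeq x n - alphaSeq y n)^2)

/-- `F = {g ∈ [ω]^ω : ρ(g,ω) < ∞}`. -/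
def Fset : Set (Set ℕ) := {g | g.Infinite ∧ rho g Set.univ < ⊤}

/-- The monoid operation `x · y = (f_y ∘ f_x)[ω]`. -/
def dotOp (x y : Set ℕ) : Set ℕ := Set.range (fEnum y ∘ fEnum x)

/-- `IsKakutaniProduct x μ` says that `μ` is the product measure
`μ^x = ∏_n (α^x_n δ_0 + (1 - α^x_n) δ_1)` on Cantor space `2^ω = ℕ → Bool`
(identifying `0` with `false` and `1` with `true`), i.e. `μ` is the Borel
probability measure giving each finite cylinder the corresponding product of
the coordinate weights.  These conditions determine `μ^x` uniquely. -/
def IsKakutaniProduct (x : Set ℕ) (μ : Measure (ℕ → Bool)) : Prop :=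
  IsProbabilityMeasure μ ∧
    ∀ (s : Finset ℕ) (f : ℕ → Bool),
      μ {g | ∀ n ∈ s, g n = f n} =
        ∏ n ∈ s, (if f n = false then ENNReal.ofReal (alphaSeq x n)
                  else ENNReal.ofReal (1 - alphaSeq x n))

/-- The subset of `ℕ` coded by a point of Cantor space. -/
def toSet (f : ℕ → Bool) : Set ℕ := {n | f n = true}

/-!
Left multiplication by `g` only relabels the nontrivial coordinates of `α^x` along `f_x`:
`α^{g·x} ∘ f_x = α^g` and `α^x ∘ f_x = α^ω`, while both sequences equal `1/4` off `x`. Hence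
`Σ (α^{g·x}_n - α^x_n)² = ρ(g, ω) < ∞`, and equivalence follows from a Kakutani-type criterion for
product measures whose weights stay away from `0` and `1`. On a cylinder `C`, Cauchy–Schwarz and
the identity `b²/a + (1-b)²/(1-a) = 1 + (b-a)²/(a(1-a))` give `ν(C)² ≤ K μ(C)` with
`K = exp (Σ (b_n - a_n)² / c)`; as cylinders form a generating algebra, this inequality extends to
all measurable sets.
-/

open Topology
open scoped symmDiff

theorem MeasureTheory.Measure.sq_le_mul_of_isSetAlgebra {α : Type*} {m : MeasurableSpace α}
    {μ ν : Measure α} [IsFiniteMeasure μ] [IsFiniteMeasure ν] {𝒜 : Set (Set α)}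
    (h𝒜 : IsSetAlgebra 𝒜) (hgen : m = MeasurableSpace.generateFrom 𝒜) {K : ℝ≥0∞} (hK : K ≠ ∞)
    (h : ∀ t ∈ 𝒜, ν t ^ 2 ≤ K * μ t) {s : Set α} (hs : MeasurableSet s) :
    ν s ^ 2 ≤ K * μ s := by
  have happrox : ∀ ε : ℝ, 0 < ε →
      (ν s - ENNReal.ofReal ε) ^ 2 ≤ K * (μ s + ENNReal.ofReal ε) := by
    intro ε hε
    obtain ⟨t, ht, hst⟩ := (Measure.MeasureDense.of_generateFrom_isSetAlgebra_finite (μ + ν)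
      h𝒜 hgen).approx s hs (measure_ne_top _ _) ε hε
    rw [Measure.add_apply] at hst
    have hνt : ν s - ENNReal.ofReal ε ≤ ν t :=
      tsub_le_iff_tsub_le.1 (le_measure_symmDiff.trans (le_add_self.trans hst.le))
    have hμt : μ t ≤ μ s + ENNReal.ofReal ε := by
      have hts := le_measure_symmDiff (μ := μ) (s₁ := t) (s₂ := s)
      rw [symmDiff_comm] at hts
      exact tsub_le_iff_left.1 (hts.trans (le_self_add.trans hst.le))
    calc (ν s - ENNReal.ofReal ε) ^ 2 ≤ ν t ^ 2 := by gcongr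
      _ ≤ K * μ t := h t ht
      _ ≤ K * (μ s + ENNReal.ofReal ε) := by gcongr
  have hε : Tendsto (fun ε : ℝ => ENNReal.ofReal ε) (𝓝[>] 0) (𝓝 0) := by
    simpa using (ENNReal.tendsto_ofReal (tendsto_id (x := 𝓝 (0 : ℝ)))).mono_left nhdsWithin_le_nhds
  have hleft : Tendsto (fun ε : ℝ => (ν s - ENNReal.ofReal ε) ^ 2) (𝓝[>] 0) (𝓝 (ν s ^ 2)) := by
    have hsub : Tendsto (fun ε : ℝ => ν s - ENNReal.ofReal ε) (𝓝[>] 0) (𝓝 (ν s)) := by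
      simpa using ENNReal.Tendsto.sub tendsto_const_nhds hε (Or.inl (measure_ne_top ν s))
    exact ENNReal.Tendsto.pow hsub
  have hright : Tendsto (fun ε : ℝ => K * (μ s + ENNReal.ofReal ε)) (𝓝[>] 0) (𝓝 (K * μ s)) := by
    simpa using ENNReal.Tendsto.const_mul (tendsto_const_nhds.add hε) (Or.inr hK)
  exact le_of_tendsto_of_tendsto hleft hright (eventually_nhdsWithin_of_forall happrox)

theorem MeasureTheory.Measure.absolutelyContinuous_of_isSetAlgebra {α : Type*}
    {m : MeasurableSpace α} {μ ν : Measure α} [IsFiniteMeasure μ] [IsFiniteMeasure ν]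
    {𝒜 : Set (Set α)} (h𝒜 : IsSetAlgebra 𝒜) (hgen : m = MeasurableSpace.generateFrom 𝒜)
    {K : ℝ≥0∞} (hK : K ≠ ∞) (h : ∀ t ∈ 𝒜, ν t ^ 2 ≤ K * μ t) : ν ≪ μ :=
  Measure.AbsolutelyContinuous.mk fun s hs hμs => by
    simpa [hμs] using Measure.sq_le_mul_of_isSetAlgebra h𝒜 hgen hK h hs

def IsBernoulliProduct (p : ℕ → ℝ) (μ : Measure (ℕ → Bool)) : Prop :=
  ∀ (s : Finset ℕ) (f : ℕ → Bool), μ {g | ∀ n ∈ s, g n = f n} =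
    ∏ n ∈ s, (if f n = false then ENNReal.ofReal (p n) else ENNReal.ofReal (1 - p n))

def bernoulliWeight (p : ℝ) : Bool → ℝ
  | false => p
  | true => 1 - p

def cylinderWeight (p : ℕ → ℝ) (s : Finset ℕ) (c : s → Bool) : ℝ :=
  ∏ i : s, bernoulliWeight (p i) (c i)

lemma bernoulliWeight_nonneg {p : ℝ} (hp : p ∈ Icc 0 1) (v : Bool) : 0 ≤ bernoulliWeight p v := by
  cases v <;> simp [bernoulliWeight, hp.1, hp.2]

lemma bernoulliWeight_pos {p : ℝ} (hp : p ∈ Ioo 0 1) (v : Bool) : 0 < bernoulliWeight p v := by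
  cases v <;> simp [bernoulliWeight, hp.1, hp.2]

lemma cylinderWeight_nonneg {p : ℕ → ℝ} (hp : ∀ n, p n ∈ Icc 0 1) (s : Finset ℕ) (c : s → Bool) :
    0 ≤ cylinderWeight p s c :=
  Finset.prod_nonneg fun i _ => bernoulliWeight_nonneg (hp i) _

namespace IsBernoulliProduct

variable {p : ℕ → ℝ} {μ : Measure (ℕ → Bool)}

lemma isProbabilityMeasure (h : IsBernoulliProduct p μ) : IsProbabilityMeasure μ :=
  ⟨by simpa using h ∅ fun _ => false⟩

lemma measure_cylinder_singleton (h : IsBernoulliProduct p μ) (hp : ∀ n, p n ∈ Icc 0 1)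
    (s : Finset ℕ) (c : s → Bool) :
    μ (cylinder s ({c} : Set (s → Bool))) = ENNReal.ofReal (cylinderWeight p s c) := by
  set f : ℕ → Bool := Function.extend (↑) c fun _ => false
  have hf : ∀ i : s, f i = c i := fun i => Subtype.val_injective.extend_apply _ _ i
  have hcyl : cylinder s ({c} : Set (s → Bool)) = {g | ∀ n ∈ s, g n = f n} := by
    ext g
    simp only [mem_cylinder, mem_singleton_iff, funext_iff, Finset.restrict, mem_ofPred_eq]
    exact ⟨fun hg n hn => hf ⟨n, hn⟩ ▸ hg ⟨n, hn⟩, fun hg i => (hf i).symm ▸ hg i i.2⟩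
  rw [hcyl, h, ← Finset.prod_coe_sort s, cylinderWeight, ENNReal.ofReal_prod_of_nonneg
    fun i _ => bernoulliWeight_nonneg (hp _) _]
  refine Finset.prod_congr rfl fun i _ => ?_
  rw [← hf i]
  cases f i <;> rfl

lemma measure_cylinder (h : IsBernoulliProduct p μ) (hp : ∀ n, p n ∈ Icc 0 1)
    (s : Finset ℕ) (T : Finset (s → Bool)) :
    μ (cylinder s T) = ENNReal.ofReal (∑ c ∈ T, cylinderWeight p s c) := by
  have hfib : ∀ c ∈ T, MeasurableSet (cylinder s ({c} : Set (s → Bool))) :=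
    fun c _ => MeasurableSet.cylinder (α := fun _ => Bool) s (measurableSet_singleton c)
  rw [cylinder, ← sum_measure_preimage_singleton T hfib,
    ENNReal.ofReal_sum_of_nonneg fun c _ => cylinderWeight_nonneg hp s c]
  exact Finset.sum_congr rfl fun c _ => h.measure_cylinder_singleton hp s c

end IsBernoulliProduct

lemma mem_Ioo_of_le_mul_one_sub {a c : ℝ} (hc : 0 < c) (ha : c ≤ a * (1 - a)) : a ∈ Ioo 0 1 := by
  constructor <;> nlinarith

lemma sum_sq_div_bernoulliWeight {a : ℝ} (ha : a ∈ Ioo 0 1) (b : ℝ) :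
    ∑ v, bernoulliWeight b v ^ 2 / bernoulliWeight a v = 1 + (b - a) ^ 2 / (a * (1 - a)) := by
  have h0 : a ≠ 0 := ha.1.ne'
  have h1 : 1 - a ≠ 0 := (sub_pos.2 ha.2).ne'
  simp only [Fintype.sum_bool, bernoulliWeight]
  field_simp
  ring

lemma sum_sq_div_cylinderWeight_le {a : ℕ → ℝ} {c : ℝ} (hc : 0 < c)
    (ha : ∀ n, c ≤ a n * (1 - a n)) (b : ℕ → ℝ) (s : Finset ℕ) :
    ∑ x : s → Bool, cylinderWeight b s x ^ 2 / cylinderWeight a s x ≤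
      Real.exp (∑ n ∈ s, (b n - a n) ^ 2 / c) := by
  have ha' : ∀ n, a n ∈ Ioo 0 1 := fun n => mem_Ioo_of_le_mul_one_sub hc (ha n)
  have hfactor : ∀ n, ∑ v, bernoulliWeight (b n) v ^ 2 / bernoulliWeight (a n) v ≤
      Real.exp ((b n - a n) ^ 2 / c) := by
    intro n
    rw [sum_sq_div_bernoulliWeight (ha' n)]
    calc 1 + (b n - a n) ^ 2 / (a n * (1 - a n)) ≤ 1 + (b n - a n) ^ 2 / c := by
          gcongr
          exact ha n
      _ ≤ _ := by linarith [Real.add_one_le_exp ((b n - a n) ^ 2 / c)]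
  calc ∑ x : s → Bool, cylinderWeight b s x ^ 2 / cylinderWeight a s x
      = ∏ i : s, ∑ v, bernoulliWeight (b i) v ^ 2 / bernoulliWeight (a i) v := by
        rw [Fintype.prod_sum]
        simp only [cylinderWeight, ← Finset.prod_pow, ← Finset.prod_div_distrib]
    _ ≤ ∏ i : s, Real.exp ((b i - a i) ^ 2 / c) := by
        refine Finset.prod_le_prod (fun i _ => Finset.sum_nonneg fun v _ => ?_)
          fun i _ => hfactor i
        have := bernoulliWeight_nonneg (Ioo_subset_Icc_self (ha' i)) v
        positivity
    _ = Real.exp (∑ n ∈ s, (b n - a n) ^ 2 / c) := by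
        rw [← Real.exp_sum, Finset.sum_coe_sort s fun n => (b n - a n) ^ 2 / c]

lemma sq_sum_cylinderWeight_le {a : ℕ → ℝ} {c : ℝ} (hc : 0 < c)
    (ha : ∀ n, c ≤ a n * (1 - a n)) (b : ℕ → ℝ) (s : Finset ℕ) (T : Finset (s → Bool)) :
    (∑ x ∈ T, cylinderWeight b s x) ^ 2 ≤
      Real.exp (∑ n ∈ s, (b n - a n) ^ 2 / c) * ∑ x ∈ T, cylinderWeight a s x := by
  have hpos : ∀ x, 0 < cylinderWeight a s x := fun x =>
    Finset.prod_pos fun i _ => bernoulliWeight_pos (mem_Ioo_of_le_mul_one_sub hc (ha i)) _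
  have hT : 0 ≤ ∑ x ∈ T, cylinderWeight a s x := Finset.sum_nonneg fun x _ => (hpos x).le
  calc (∑ x ∈ T, cylinderWeight b s x) ^ 2
      ≤ (∑ x ∈ T, cylinderWeight b s x ^ 2 / cylinderWeight a s x) *
          ∑ x ∈ T, cylinderWeight a s x :=
        Finset.sum_sq_le_sum_mul_sum_of_sq_le_mul T (fun x _ => by have := hpos x; positivity)
          (fun x _ => (hpos x).le) fun x _ => (div_mul_cancel₀ _ (hpos x).ne').ge
    _ ≤ (∑ x, cylinderWeight b s x ^ 2 / cylinderWeight a s x) *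
          ∑ x ∈ T, cylinderWeight a s x :=
        mul_le_mul_of_nonneg_right (Finset.sum_le_sum_of_subset_of_nonneg (Finset.subset_univ T)
          fun x _ _ => by have := hpos x; positivity) hT
    _ ≤ _ := mul_le_mul_of_nonneg_right (sum_sq_div_cylinderWeight_le hc ha b s) hT

theorem IsBernoulliProduct.absolutelyContinuous {a b : ℕ → ℝ} {c : ℝ} (hc : 0 < c)
    (ha : ∀ n, c ≤ a n * (1 - a n)) (hb : ∀ n, b n ∈ Icc 0 1)
    (hab : Summable fun n => (b n - a n) ^ 2) {μ ν : Measure (ℕ → Bool)}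
    (hμ : IsBernoulliProduct a μ) (hν : IsBernoulliProduct b ν) : ν ≪ μ := by
  have ha' : ∀ n, a n ∈ Icc 0 1 := fun n =>
    Ioo_subset_Icc_self (mem_Ioo_of_le_mul_one_sub hc (ha n))
  have := hμ.isProbabilityMeasure
  have := hν.isProbabilityMeasure
  refine Measure.absolutelyContinuous_of_isSetAlgebra isSetAlgebra_measurableCylinders
    generateFrom_measurableCylinders.symm
    (K := ENNReal.ofReal (Real.exp (∑' n, (b n - a n) ^ 2 / c))) ENNReal.ofReal_ne_top ?_
  intro t ht
  obtain ⟨s, S, -, rfl⟩ := (mem_measurableCylinders t).1 ht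
  rw [← S.toFinite.coe_toFinset, hμ.measure_cylinder ha', hν.measure_cylinder hb,
    ← ENNReal.ofReal_pow (Finset.sum_nonneg fun x _ => cylinderWeight_nonneg hb s x),
    ← ENNReal.ofReal_mul (Real.exp_pos _).le]
  refine ENNReal.ofReal_le_ofReal ((sq_sum_cylinderWeight_le hc ha b s _).trans ?_)
  gcongr
  · exact Finset.sum_nonneg fun x _ => cylinderWeight_nonneg ha' s x
  · exact (hab.div_const c).sum_le_tsum s fun n _ => by positivity

section Enumeration

variable {g x y : Set ℕ}

lemma fEnum_strictMono (hx : x.Infinite) : StrictMono (fEnum x) := Nat.nth_strictMono hx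

lemma fEnum_injective (hx : x.Infinite) : Function.Injective (fEnum x) :=
  Nat.nth_injective hx

lemma range_fEnum (hx : x.Infinite) : range (fEnum x) = x := Nat.range_nth_of_infinite hx

lemma fEnum_mem (hx : x.Infinite) (k : ℕ) : fEnum x k ∈ x := Nat.nth_mem_of_infinite hx k

lemma dotOp_subset (hx : x.Infinite) : dotOp g x ⊆ x := by
  rintro _ ⟨k, rfl⟩
  exact fEnum_mem hx _

lemma dotOp_eq_image (hg : g.Infinite) : dotOp g x = fEnum x '' g := by
  rw [dotOp, range_comp, range_fEnum hg]

lemma dotOp_univ_left (hx : x.Infinite) : dotOp univ x = x := by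
  rw [dotOp_eq_image infinite_univ, image_univ, range_fEnum hx]

lemma dotOp_infinite (hg : g.Infinite) (hx : x.Infinite) : (dotOp g x).Infinite := by
  rw [dotOp_eq_image hg]
  exact hg.image (fEnum_injective hx).injOn

lemma fEnum_dotOp (hg : g.Infinite) (hx : x.Infinite) (j : ℕ) :
    fEnum (dotOp g x) j = fEnum x (fEnum g j) := by
  have hpull : (fun i => fEnum x i ∈ dotOp g x) = (· ∈ g) := by
    ext i
    rw [dotOp_eq_image hg, (fEnum_injective hx).mem_set_image]
  have h := Nat.nth_comp_of_strictMono (fEnum_strictMono hx) (n := j)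
    (fun k hk => (range_fEnum hx).symm ▸ dotOp_subset hx hk)
    fun hfin => absurd hfin (dotOp_infinite hg hx)
  rw [hpull] at h
  exact h.symm

lemma alphaSeq_fEnum (hy : y.Infinite) (j : ℕ) :
    alphaSeq y (fEnum y j) = 1 / 4 + 1 / (2 * Real.sqrt ((j : ℝ) + 1)) := by
  classical
  rw [alphaSeq, if_pos (fEnum_mem hy j), fEnum, Nat.count_nth_of_infinite (p := (· ∈ y)) hy]

lemma alphaSeq_of_notMem {n : ℕ} (hn : n ∉ y) : alphaSeq y n = 1 / 4 := by
  rw [alphaSeq, if_neg hn]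

lemma alphaSeq_mem_Icc (y : Set ℕ) (n : ℕ) : alphaSeq y n ∈ Icc (1 / 4) (3 / 4) := by
  have hbound : ∀ t : ℝ, 0 ≤ t → 1 / 4 + 1 / (2 * Real.sqrt (t + 1)) ∈ Icc (1 / 4) (3 / 4) := by
    intro t ht
    have hsqrt : 1 ≤ Real.sqrt (t + 1) := Real.one_le_sqrt.2 (by linarith)
    have hinv : 1 / (2 * Real.sqrt (t + 1)) ≤ 1 / 2 :=
      one_div_le_one_div_of_le two_pos (by linarith)
    constructor <;> linarith [one_div_pos.2 (by positivity : 0 < 2 * Real.sqrt (t + 1))]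
  rw [alphaSeq]
  split_ifs
  · exact hbound _ (Nat.cast_nonneg _)
  · norm_num

lemma alphaSeq_mul_one_sub_alphaSeq (y : Set ℕ) (n : ℕ) :
    3 / 16 ≤ alphaSeq y n * (1 - alphaSeq y n) := by
  obtain ⟨h₁, h₂⟩ := alphaSeq_mem_Icc y n
  nlinarith

lemma alphaSeq_dotOp_fEnum (hg : g.Infinite) (hx : x.Infinite) (k : ℕ) :
    alphaSeq (dotOp g x) (fEnum x k) = alphaSeq g k := by
  by_cases hk : k ∈ g
  · obtain ⟨j, rfl⟩ : k ∈ range (fEnum g) := (range_fEnum hg).symm ▸ hk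
    rw [← fEnum_dotOp hg hx, alphaSeq_fEnum (dotOp_infinite hg hx), alphaSeq_fEnum hg]
  · rw [alphaSeq_of_notMem hk, alphaSeq_of_notMem]
    rwa [dotOp_eq_image hg, (fEnum_injective hx).mem_set_image]

lemma tsum_ofReal_sq_alphaSeq_dotOp_sub (hg : g.Infinite) (hx : x.Infinite) :
    ∑' n, ENNReal.ofReal ((alphaSeq (dotOp g x) n - alphaSeq x n) ^ 2) = rho g univ := by
  rw [rho, ← (fEnum_injective hx).tsum_eq]
  · congr with k
    have hx' := alphaSeq_dotOp_fEnum infinite_univ hx k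
    rw [dotOp_univ_left hx] at hx'
    rw [alphaSeq_dotOp_fEnum hg hx, hx']
  · intro n hn
    rw [range_fEnum hx]
    by_contra hnx
    apply hn
    simp [alphaSeq_of_notMem hnx, alphaSeq_of_notMem fun h => hnx (dotOp_subset hx h)]

end Enumeration

/-- For every `g ∈ F` and every `x ∈ [ω]^ω`, the measures `μ^{g·x}` and `μ^x`
are equivalent, i.e. mutually absolutely continuous. -/
theorem mu_dotOp_equiv (μ : Set ℕ → Measure (ℕ → Bool))
    (hμ : ∀ x : Set ℕ, IsKakutaniProduct x (μ x)) :
    ∀ g ∈ Fset, ∀ x : Set ℕ, x.Infinite →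
      μ (dotOp g x) ≪ μ x ∧ μ x ≪ μ (dotOp g x) := by
  rintro g ⟨hg, hρ⟩ x hx
  have hsum : Summable fun n => (alphaSeq (dotOp g x) n - alphaSeq x n) ^ 2 := by
    have hfin := tsum_ofReal_sq_alphaSeq_dotOp_sub hg hx ▸ hρ.ne
    exact (ENNReal.summable_toReal hfin).congr fun n => ENNReal.toReal_ofReal (sq_nonneg _)
  have hIcc : ∀ y n, alphaSeq y n ∈ Icc 0 1 := fun y n =>
    Icc_subset_Icc (by norm_num) (by norm_num) (alphaSeq_mem_Icc y n)
  have hc : (0 : ℝ) < 3 / 16 := by norm_num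
  exact ⟨IsBernoulliProduct.absolutelyContinuous hc (alphaSeq_mul_one_sub_alphaSeq x)
      (hIcc _) hsum (hμ x).2 (hμ _).2,
    IsBernoulliProduct.absolutelyContinuous hc (alphaSeq_mul_one_sub_alphaSeq _) (hIcc x)
      (hsum.congr fun n => by ring) (hμ _).2 (hμ x).2⟩
end
end

section
/- If x and y are infinite sets of natural numbers whose symmetric difference x △ y is finite, then ρ(x,y) < ∞. -/
open MeasureTheory Filter Set
open scoped ENNReal

noncomputable section

/-! Beyond a bound `N` for `x ∆ y` the sets agree, so the ranks of `n` in `x` and in `y` differ by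
the constant `d = |x ∩ [0,N)| - |y ∩ [0,N)|`, and the terms with `n ∉ x` vanish. For `n ∈ x`,
with `u, v` these ranks plus one, the `n`-th term of `ρ(x,y)` is
`(1/(2√u) - 1/(2√v))² ≤ (u - v)²/u² = d²/u²`; since `n ↦ u` is injective on `x`, these bounds
add up to at most `d² ∑ 1/k²`. -/

theorem Nat.count_sub_count_eq_of_forall_le {p q : ℕ → Prop} [DecidablePred p] [DecidablePred q]
    {N : ℕ} (hpq : ∀ n, N ≤ n → (p n ↔ q n)) {n : ℕ} (hn : N ≤ n) :
    (Nat.count p n : ℤ) - Nat.count q n = Nat.count p N - Nat.count q N := by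
  induction n, hn using Nat.le_induction with
  | base => rfl
  | succ n hn ih =>
    simp only [Nat.count_succ, hpq n hn]
    push_cast
    linarith

theorem summable_indicator_comp_count {f : ℕ → ℝ} (hf : Summable f) (s : Set ℕ)
    [DecidablePred (· ∈ s)] :
    Summable (s.indicator fun n => f (Nat.count (· ∈ s) n)) :=
  summable_subtype_iff_indicator.mp <| hf.comp_injective (i := fun n : s => Nat.count (· ∈ s) n)
    fun m n hmn => Subtype.ext (Nat.count_injective m.2 n.2 hmn)

theorem sq_one_div_two_sqrt_sub_le {u v : ℝ} (hu : 0 < u) (hv : 1 ≤ v) :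
    (1 / (2 * √u) - 1 / (2 * √v)) ^ 2 ≤ (u - v) ^ 2 / u ^ 2 := by
  obtain ⟨s, hs, rfl⟩ : ∃ s, 0 < s ∧ u = s ^ 2 :=
    ⟨√u, Real.sqrt_pos.2 hu, (Real.sq_sqrt hu.le).symm⟩
  obtain ⟨t, ht, rfl⟩ : ∃ t, 1 ≤ t ∧ v = t ^ 2 :=
    ⟨√v, Real.one_le_sqrt.2 hv, (Real.sq_sqrt (by linarith)).symm⟩
  rw [Real.sqrt_sq hs.le, Real.sqrt_sq (by linarith), div_sub_div _ _ (by positivity)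
    (by positivity), div_pow, div_le_div_iff₀ (by positivity) (by positivity)]
  have key : s ^ 2 ≤ 4 * (s + t) ^ 2 * t ^ 2 := by nlinarith
  nlinarith [mul_le_mul_of_nonneg_left key (by positivity : 0 ≤ 4 * (t - s) ^ 2 * s ^ 2)]

theorem alphaSeq_of_mem {x : Set ℕ} [DecidablePred (· ∈ x)] {n : ℕ} (h : n ∈ x) :
    alphaSeq x n = 1 / 4 + 1 / (2 * √((Nat.count (· ∈ x) n : ℝ) + 1)) := by
  simp only [alphaSeq, h, if_true]
  congr

theorem alphaSeq_of_notMem_s8 {x : Set ℕ} {n : ℕ} (h : n ∉ x) : alphaSeq x n = 1 / 4 := by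
  simp only [alphaSeq, h, if_false]

theorem sq_alphaSeq_sub_le {x y : Set ℕ} [DecidablePred (· ∈ x)] [DecidablePred (· ∈ y)] {n : ℕ}
    (hx : n ∈ x) (hy : n ∈ y) :
    (alphaSeq x n - alphaSeq y n) ^ 2 ≤
      ((Nat.count (· ∈ x) n : ℝ) - Nat.count (· ∈ y) n) ^ 2 /
        ((Nat.count (· ∈ x) n : ℝ) + 1) ^ 2 := by
  rw [alphaSeq_of_mem hx, alphaSeq_of_mem hy, add_sub_add_left_eq_sub]
  convert sq_one_div_two_sqrt_sub_le (u := Nat.count (· ∈ x) n + 1)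
    (v := Nat.count (· ∈ y) n + 1) (by positivity) (by simp) using 2
  ring

theorem exists_forall_le_mem_iff_of_finite_symmDiff {x y : Set ℕ} (h : (symmDiff x y).Finite) :
    ∃ N, ∀ n, N ≤ n → (n ∈ x ↔ n ∈ y) := by
  have hev := h.eventually_cofinite_notMem
  rw [Nat.cofinite_eq_atTop, eventually_atTop] at hev
  obtain ⟨N, hN⟩ := hev
  exact ⟨N, fun n hn => by simpa [Set.mem_symmDiff, iff_def, imp_iff_not_or] using hN n hn⟩

theorem summable_sq_alphaSeq_sub {x y : Set ℕ} (h : (symmDiff x y).Finite) :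
    Summable fun n => (alphaSeq x n - alphaSeq y n) ^ 2 := by
  classical
  obtain ⟨N, hN⟩ := exists_forall_le_mem_iff_of_finite_symmDiff h
  set d : ℝ := Nat.count (· ∈ x) N - Nat.count (· ∈ y) N
  have hd (n : ℕ) (hn : N ≤ n) : (Nat.count (· ∈ x) n : ℝ) - Nat.count (· ∈ y) n = d := by
    have := Nat.count_sub_count_eq_of_forall_le hN hn
    unfold d
    exact_mod_cast this
  have hsum : Summable fun k : ℕ => d ^ 2 * (1 / ((k : ℝ) + 1) ^ 2) := by
    refine Summable.mul_left _ ?_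
    exact_mod_cast (summable_nat_add_iff 1).2 (Real.summable_one_div_nat_pow.2 one_lt_two)
  refine .of_norm_bounded_eventually_nat (summable_indicator_comp_count hsum x) ?_
  filter_upwards [eventually_ge_atTop N] with n hn
  rw [Real.norm_of_nonneg (sq_nonneg _)]
  by_cases hx : n ∈ x
  · rw [Set.indicator_of_mem hx, ← hd n hn, mul_one_div]
    exact sq_alphaSeq_sub_le hx ((hN n hn).1 hx)
  · rw [Set.indicator_of_notMem hx, alphaSeq_of_notMem_s8 hx,
      alphaSeq_of_notMem_s8 fun hy => hx ((hN n hn).2 hy)]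
    simp

theorem rho_lt_top_of_symmDiff_finite_general (x y : Set ℕ)
    (h : (symmDiff x y).Finite) :
    rho x y < ⊤ := by
  rw [rho, ← ENNReal.ofReal_tsum_of_nonneg (fun n => sq_nonneg _) (summable_sq_alphaSeq_sub h)]
  exact ENNReal.ofReal_lt_top

/-- If `x, y ∈ [ω]^ω` have finite symmetric difference then `ρ(x,y) < ∞`. -/
theorem rho_lt_top_of_symmDiff_finite (x y : Set ℕ)
    (hx : x.Infinite) (hy : y.Infinite)
    (h : (symmDiff x y).Finite) :
    rho x y < ⊤ :=
  rho_lt_top_of_symmDiff_finite_general x y h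

end
end
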